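/- Let G be a δ-hyperbolic group. For every λ ∈ (0,1] and ε ∈ ℕ₀ there is k₀ > 8δ such that for every k ≥ k₀ there exist λ' ∈ (0,1] and ε' ∈ ℕ₀ such that every k-local (λ, ε)-quasi-geodesic c : N → G (N ⊆ ℤ an interval) is a (λ', ε')-quasi-geodesic. -/
import Mathlib


/-- The word metric on a group `G` with respect to a generating set `S`. -/
noncomputable def wordDist {G : Type*} [Group G] (S : Set G) (g h : G) : ℕ :=
  sInf {n | ∃ l : List G, (∀ x ∈ l, x ∈ S) ∧ l.length = n ∧ g = h * l.prod}

/-- `S` is a finite symmetric generating set of `G`. -/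
def IsFinSymmGenSet {G : Type*} [Group G] (S : Set G) : Prop :=
  S.Finite ∧ (∀ s ∈ S, s⁻¹ ∈ S) ∧ Subgroup.closure S = ⊤

/-- A discrete geodesic segment from `g` to `h` with respect to the integer-valued
metric `d`, parametrized on `[0, d g h]`. -/
def IsGeodesicSeg {G : Type*} (d : G → G → ℕ) (c : ℕ → G) (g h : G) : Prop :=
  c 0 = g ∧ c (d g h) = h ∧
    ∀ i j : ℕ, i ≤ d g h → j ≤ d g h → d (c i) (c j) = Nat.dist i j

/-- A discrete geodesic ray: an isometric embedding `c : ℕ → G`. -/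
def IsGeodesicRay {G : Type*} (d : G → G → ℕ) (c : ℕ → G) : Prop :=
  ∀ i j : ℕ, d (c i) (c j) = Nat.dist i j

/-- Two rays are asymptotic if their images are at finite Hausdorff distance. -/
def Asymptotic {G : Type*} (d : G → G → ℕ) (c c' : ℕ → G) : Prop :=
  ∃ K : ℕ, (∀ t : ℕ, ∃ s : ℕ, d (c t) (c' s) ≤ K) ∧ (∀ s : ℕ, ∃ t : ℕ, d (c' s) (c t) ≤ K)

/-- Rips δ-hyperbolicity of the integer-valued metric `d`: each side of any discrete
geodesic triangle is contained in the δ-neighborhood of the union of the other two sides. -/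
def DiscHyperbolic {G : Type*} (d : G → G → ℕ) (δ : ℕ) : Prop :=
  ∀ x y z : G, ∀ cxy cyz czx : ℕ → G,
    IsGeodesicSeg d cxy x y → IsGeodesicSeg d cyz y z → IsGeodesicSeg d czx z x →
    ∀ i ≤ d x y, ∃ p ∈ cyz '' Set.Iic (d y z) ∪ czx '' Set.Iic (d z x), d (cxy i) p ≤ δ

/-- A `k`-local `(λ,ε)`-quasi-geodesic on an interval `N ⊆ ℤ` (captured by order
connectedness): the quasi-geodesic inequalities hold for parameters at distance ≤ `k`. -/
def IsLocalQuasiGeodesicZ {G : Type*} (d : G → G → ℕ) (c : ℤ → G) (N : Set ℤ)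
    (k : ℕ) (lam : ℝ) (eps : ℕ) : Prop :=
  ∀ s ∈ N, ∀ t ∈ N, |s - t| ≤ (k : ℤ) →
    (lam * (|s - t| : ℤ) - (eps : ℝ) ≤ (d (c s) (c t) : ℝ) ∧ (d (c s) (c t) : ℤ) ≤ |s - t|)

/-- A (global) `(λ,ε)`-quasi-geodesic on an interval `N ⊆ ℤ`. -/
def IsQuasiGeodesicZ {G : Type*} (d : G → G → ℕ) (c : ℤ → G) (N : Set ℤ)
    (lam : ℝ) (eps : ℕ) : Prop :=
  ∀ s ∈ N, ∀ t ∈ N,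
    (lam * (|s - t| : ℤ) - (eps : ℝ) ≤ (d (c s) (c t) : ℝ) ∧ (d (c s) (c t) : ℤ) ≤ |s - t|)


section Basics
variable {G : Type*} [Group G] {S : Set G}

lemma exists_word (hS : IsFinSymmGenSet S) (x : G) :
    ∃ l : List G, (∀ a ∈ l, a ∈ S) ∧ l.prod = x := by
  have hx : x ∈ Subgroup.closure S := by rw [hS.2.2]; trivial
  induction hx using Subgroup.closure_induction with
  | mem s hs => exact ⟨[s], by simp [hs]⟩
  | one => exact ⟨[], by simp⟩
  | mul a b _ _ iha ihb =>
      obtain ⟨l1, h1, p1⟩ := iha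
      obtain ⟨l2, h2, p2⟩ := ihb
      exact ⟨l1 ++ l2, by
        constructor
        · intro a ha; rcases List.mem_append.1 ha with h | h
          exacts [h1 a h, h2 a h]
        · simp [p1, p2]⟩
  | inv a _ iha =>
      obtain ⟨l, h1, p1⟩ := iha
      refine ⟨(l.map Inv.inv).reverse, ?_, ?_⟩
      · intro a ha
        simp only [List.mem_reverse, List.mem_map] at ha
        obtain ⟨b, hb, rfl⟩ := ha
        exact hS.2.1 b (h1 b hb)
      · rw [List.prod_reverse_noncomm]
        simp [p1]

lemma wordDist_set_nonempty (hS : IsFinSymmGenSet S) (g h : G) :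
    {n | ∃ l : List G, (∀ x ∈ l, x ∈ S) ∧ l.length = n ∧ g = h * l.prod}.Nonempty := by
  obtain ⟨l, hl, hp⟩ := exists_word hS (h⁻¹ * g)
  exact ⟨l.length, l, hl, rfl, by rw [hp]; group⟩

lemma wordDist_spec (hS : IsFinSymmGenSet S) (g h : G) :
    ∃ l : List G, (∀ x ∈ l, x ∈ S) ∧ l.length = wordDist S g h ∧ g = h * l.prod :=
  Nat.sInf_mem (wordDist_set_nonempty hS g h)

lemma wordDist_le {g h : G} {l : List G} (hl : ∀ x ∈ l, x ∈ S) (hp : g = h * l.prod) :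
    wordDist S g h ≤ l.length :=
  Nat.sInf_le ⟨l, hl, rfl, hp⟩

lemma wordDist_self (g : G) : wordDist S g g = 0 :=
  Nat.le_zero.1 (by simpa using wordDist_le (l := []) (by simp) (by simp))

lemma wordDist_comm (hS : IsFinSymmGenSet S) (g h : G) :
    wordDist S g h = wordDist S h g := by
  have key : ∀ a b : G, wordDist S a b ≤ wordDist S b a := by
    intro a b
    obtain ⟨l, hl, hlen, hp⟩ := wordDist_spec hS b a
    have hl' : ∀ x ∈ (l.map Inv.inv).reverse, x ∈ S := by
      intro x hx
      simp only [List.mem_reverse, List.mem_map] at hx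
      obtain ⟨y, hy, rfl⟩ := hx
      exact hS.2.1 y (hl y hy)
    have hp' : a = b * ((l.map Inv.inv).reverse).prod := by
      rw [List.prod_reverse_noncomm]
      simp only [List.map_map]
      have : (l.map (Inv.inv ∘ Inv.inv)).prod = l.prod := by
        congr 1; simp [List.map_id']
      rw [this]
      rw [hp]; group
    calc wordDist S a b ≤ _ := wordDist_le hl' hp'
      _ = l.length := by simp
      _ = _ := hlen
  exact le_antisymm (key g h) (key h g)

lemma wordDist_triangle (hS : IsFinSymmGenSet S) (g m h : G) :
    wordDist S g h ≤ wordDist S g m + wordDist S m h := by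
  obtain ⟨l1, h1, len1, p1⟩ := wordDist_spec hS g m
  obtain ⟨l2, h2, len2, p2⟩ := wordDist_spec hS m h
  have : g = h * (l2 ++ l1).prod := by
    rw [List.prod_append, ← mul_assoc, ← p2, ← p1]
  calc wordDist S g h ≤ (l2 ++ l1).length := wordDist_le (by
        intro x hx; rcases List.mem_append.1 hx with h | h
        exacts [h2 x h, h1 x h]) this
    _ = _ := by simp [len1, len2, Nat.add_comm]

lemma wordDist_eq_zero (hS : IsFinSymmGenSet S) {g h : G} (h0 : wordDist S g h = 0) :
    g = h := by
  obtain ⟨l, _, hlen, hp⟩ := wordDist_spec hS g h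
  rw [h0] at hlen
  rw [List.length_eq_zero_iff] at hlen
  simp [hlen] at hp; simp [hp]

lemma exists_geodesic (hS : IsFinSymmGenSet S) (g h : G) :
    ∃ c : ℕ → G, IsGeodesicSeg (wordDist S) c g h := by
  obtain ⟨l, hl, hlen, hp⟩ := wordDist_spec hS h g
  -- h = g * l.prod, l.length = wordDist S h g = wordDist S g h
  set n := wordDist S g h with hn
  have hlen' : l.length = n := by rw [hlen, wordDist_comm hS]
  refine ⟨fun i => g * (l.take i).prod, by simp, ?_, ?_⟩
  · show g * (l.take n).prod = h
    rw [← hlen', List.take_length, ← hp]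
  · -- distances
    have key : ∀ i j : ℕ, i ≤ j → wordDist S (g * (l.take j).prod) (g * (l.take i).prod) ≤ j - i := by
      intro i j hij
      have htake : l.take j = l.take i ++ ((l.drop i).take (j - i)) := by
        rw [← List.take_add]
        congr 1; omega
      have : g * (l.take j).prod = (g * (l.take i).prod) * ((l.drop i).take (j - i)).prod := by
        rw [htake, List.prod_append, mul_assoc]
      calc wordDist S (g * (l.take j).prod) (g * (l.take i).prod)
          ≤ ((l.drop i).take (j - i)).length := wordDist_le (by
            intro x hx
            exact hl x (List.mem_of_mem_drop (List.mem_of_mem_take hx))) this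
        _ ≤ j - i := by simp
    intro i j hi hj
    -- WLOG i ≤ j
    rcases le_total i j with hij | hij
    · have hle : wordDist S (g * (l.take i).prod) (g * (l.take j).prod) ≤ j - i := by
        rw [wordDist_comm hS]; exact key i j hij
      have hge : j - i ≤ wordDist S (g * (l.take i).prod) (g * (l.take j).prod) := by
        have t1 : wordDist S g (g * (l.take i).prod) ≤ i := by
          rw [wordDist_comm hS]
          calc wordDist S (g * (l.take i).prod) g ≤ (l.take i).length := wordDist_le
                (fun x hx => hl x (List.mem_of_mem_take hx)) rfl
            _ ≤ i := by simp
        have t2 : wordDist S (g * (l.take j).prod) h ≤ n - j := by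
          have : h = (g * (l.take j).prod) * ((l.drop j)).prod := by
            rw [mul_assoc, ← List.prod_append, List.take_append_drop, ← hp]
          rw [wordDist_comm hS]
          calc wordDist S h (g * (l.take j).prod) ≤ (l.drop j).length := wordDist_le
                (fun x hx => hl x (List.mem_of_mem_drop hx)) this
            _ ≤ n - j := by simp [hlen']
        have tri : n ≤ wordDist S g (g * (l.take i).prod)
            + wordDist S (g * (l.take i).prod) (g * (l.take j).prod)
            + wordDist S (g * (l.take j).prod) h := by
          calc n = wordDist S g h := rfl
            _ ≤ wordDist S g (g * (l.take j).prod) + wordDist S (g * (l.take j).prod) h :=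
              wordDist_triangle hS _ _ _
            _ ≤ _ := by
              have := wordDist_triangle hS g (g * (l.take i).prod) (g * (l.take j).prod)
              omega
        omega
      have : wordDist S (g * (l.take i).prod) (g * (l.take j).prod) = j - i := le_antisymm hle hge
      rw [this, Nat.dist_eq_sub_of_le hij]
    · have hle : wordDist S (g * (l.take j).prod) (g * (l.take i).prod) ≤ i - j := by
        rw [wordDist_comm hS]; exact key j i hij
      have hge : i - j ≤ wordDist S (g * (l.take j).prod) (g * (l.take i).prod) := by
        have t1 : wordDist S g (g * (l.take j).prod) ≤ j := by
          rw [wordDist_comm hS]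
          calc wordDist S (g * (l.take j).prod) g ≤ (l.take j).length := wordDist_le
                (fun x hx => hl x (List.mem_of_mem_take hx)) rfl
            _ ≤ j := by simp
        have t2 : wordDist S (g * (l.take i).prod) h ≤ n - i := by
          have : h = (g * (l.take i).prod) * ((l.drop i)).prod := by
            rw [mul_assoc, ← List.prod_append, List.take_append_drop, ← hp]
          rw [wordDist_comm hS]
          calc wordDist S h (g * (l.take i).prod) ≤ (l.drop i).length := wordDist_le
                (fun x hx => hl x (List.mem_of_mem_drop hx)) this
            _ ≤ n - i := by simp [hlen']
        have tri : n ≤ wordDist S g (g * (l.take j).prod)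
            + wordDist S (g * (l.take j).prod) (g * (l.take i).prod)
            + wordDist S (g * (l.take i).prod) h := by
          calc n = wordDist S g h := rfl
            _ ≤ wordDist S g (g * (l.take i).prod) + wordDist S (g * (l.take i).prod) h :=
              wordDist_triangle hS _ _ _
            _ ≤ _ := by
              have := wordDist_triangle hS g (g * (l.take j).prod) (g * (l.take i).prod)
              omega
        omega
      have h2 : wordDist S (g * (l.take j).prod) (g * (l.take i).prod) = i - j := le_antisymm hle hge
      rw [wordDist_comm hS, h2, Nat.dist_comm, Nat.dist_eq_sub_of_le hij]

end Basics

section Hyp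
variable {G : Type*} [Group G] (S : Set G)

/-- Doubled Gromov product, as an integer. -/
noncomputable def gp2 (w x y : G) : ℤ :=
  (wordDist S w x : ℤ) + wordDist S w y - wordDist S x y

variable {S}
variable (hS : IsFinSymmGenSet S)
include hS

lemma gp2_nonneg (w x y : G) : 0 ≤ gp2 S w x y := by
  have h1 := wordDist_triangle hS x w y
  have h2 := wordDist_comm hS x w
  unfold gp2; omega

lemma gp2_symm (w x y : G) : gp2 S w x y = gp2 S w y x := by
  have := wordDist_comm hS x y
  unfold gp2; omega

lemma gp2_flip (w x y : G) : gp2 S w x y + gp2 S y x w = 2 * wordDist S w y := by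
  have h1 := wordDist_comm hS w x
  have h2 := wordDist_comm hS w y
  have h3 := wordDist_comm hS x y
  unfold gp2; omega

/-- Any point on a geodesic from `x` to `y` bounds the Gromov product from below. -/
lemma gp2_le_geodesic {σ : ℕ → G} {x y : G} (hσ : IsGeodesicSeg (wordDist S) σ x y)
    {i : ℕ} (hi : i ≤ wordDist S x y) (w : G) :
    gp2 S w x y ≤ 2 * wordDist S w (σ i) := by
  obtain ⟨h0, hn, hd⟩ := hσ
  have hxi : wordDist S x (σ i) = i := by
    have := hd 0 i (by omega) hi
    rw [h0] at this; rw [this]; simp [Nat.dist]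
  have hiy : wordDist S (σ i) y = wordDist S x y - i := by
    have := hd i (wordDist S x y) hi le_rfl
    rw [hn] at this; rw [this, Nat.dist_eq_sub_of_le hi]
  have t1 : wordDist S w x ≤ wordDist S w (σ i) + wordDist S (σ i) x :=
    wordDist_triangle hS _ _ _
  have t2 : wordDist S w y ≤ wordDist S w (σ i) + wordDist S (σ i) y :=
    wordDist_triangle hS _ _ _
  have c1 := wordDist_comm hS x (σ i)
  unfold gp2; omega

variable {δ : ℕ} (hhyp : DiscHyperbolic (wordDist S) δ)
include hhyp

/-- Four point inequality derived from slim triangles. -/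
lemma fourPoint (w x y z : G) :
    min (gp2 S w x y) (gp2 S w y z) ≤ gp2 S w x z + 6 * δ + 2 := by
  obtain ⟨σ, hσ⟩ := exists_geodesic hS x z
  set n := wordDist S x z with hn
  have ha0 : (0 : ℤ) ≤ (wordDist S x w : ℤ) + n - wordDist S w z := by
    have t := wordDist_triangle hS w x z
    have c1 := wordDist_comm hS x w
    omega
  have ha2 : (wordDist S x w : ℤ) + n - wordDist S w z ≤ 2 * n := by
    have t := wordDist_triangle hS x z w
    have c1 := wordDist_comm hS z w
    omega
  set a : ℤ := (wordDist S x w : ℤ) + n - wordDist S w z with hadef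
  set i : ℕ := a.toNat / 2 with hidef
  have h2i : (2 * i : ℤ) ≤ a ∧ a - 1 ≤ 2 * i := by
    constructor <;> omega
  have hi : i ≤ n := by omega
  -- distances along σ
  have hσ0 : σ 0 = x := hσ.1
  have hσn : σ n = z := hσ.2.1
  have hxi : wordDist S x (σ i) = i := by
    have := hσ.2.2 0 i (by omega) hi
    rw [hσ0] at this; rw [this]; simp [Nat.dist]
  have hiz : wordDist S (σ i) z = n - i := by
    have := hσ.2.2 i n hi le_rfl
    rw [hσn] at this; rw [this, Nat.dist_eq_sub_of_le hi]
  -- Step 1 : w is close to σ i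
  obtain ⟨τ₁, hτ₁⟩ := exists_geodesic hS z w
  obtain ⟨τ₂, hτ₂⟩ := exists_geodesic hS w x
  obtain ⟨p, hp, hdp⟩ := hhyp x z w σ τ₁ τ₂ hσ hτ₁ hτ₂ i hi
  have step1 : 2 * (wordDist S w (σ i) : ℤ) ≤ gp2 S w x z + 4 * δ + 1 := by
    rcases hp with ⟨j, hj, rfl⟩ | ⟨j, hj, rfl⟩
    · -- p on geodesic from z to w
      simp only [Set.mem_Iic] at hj
      have hzj : wordDist S z (τ₁ j) = j := by
        have := hτ₁.2.2 0 j (by omega) hj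
        rw [hτ₁.1] at this; rw [this]; simp [Nat.dist]
      have hjw : wordDist S (τ₁ j) w = wordDist S z w - j := by
        have := hτ₁.2.2 j (wordDist S z w) hj le_rfl
        rw [hτ₁.2.1] at this; rw [this, Nat.dist_eq_sub_of_le hj]
      have t1 := wordDist_triangle hS z (τ₁ j) (σ i)
      have t2 := wordDist_triangle hS w (τ₁ j) (σ i)
      have c1 := wordDist_comm hS z (σ i)
      have c2 := wordDist_comm hS (τ₁ j) (σ i)
      have c3 := wordDist_comm hS w (τ₁ j)
      have c4 := wordDist_comm hS z w
      have c5 := wordDist_comm hS x w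
      unfold gp2; omega
    · -- p on geodesic from w to x
      simp only [Set.mem_Iic] at hj
      have hwj : wordDist S w (τ₂ j) = j := by
        have := hτ₂.2.2 0 j (by omega) hj
        rw [hτ₂.1] at this; rw [this]; simp [Nat.dist]
      have hjx : wordDist S (τ₂ j) x = wordDist S w x - j := by
        have := hτ₂.2.2 j (wordDist S w x) hj le_rfl
        rw [hτ₂.2.1] at this; rw [this, Nat.dist_eq_sub_of_le hj]
      have t1 := wordDist_triangle hS x (τ₂ j) (σ i)
      have t2 := wordDist_triangle hS w (τ₂ j) (σ i)
      have c1 := wordDist_comm hS x (σ i)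
      have c2 := wordDist_comm hS (τ₂ j) (σ i)
      have c3 := wordDist_comm hS x (τ₂ j)
      have c4 := wordDist_comm hS x w
      unfold gp2; omega
  -- Step 2 : σ i is close to a geodesic side through y
  obtain ⟨τ₃, hτ₃⟩ := exists_geodesic hS z y
  obtain ⟨τ₄, hτ₄⟩ := exists_geodesic hS y x
  obtain ⟨q, hq, hdq⟩ := hhyp x z y σ τ₃ τ₄ hσ hτ₃ hτ₄ i hi
  have hwq : (wordDist S w q : ℤ) ≤ wordDist S w (σ i) + δ := by
    have t := wordDist_triangle hS w (σ i) q
    omega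
  rcases hq with ⟨j, hj, rfl⟩ | ⟨j, hj, rfl⟩
  · simp only [Set.mem_Iic] at hj
    have hkey := gp2_le_geodesic hS hτ₃ hj w
    have hsymm := gp2_symm hS w y z
    have : min (gp2 S w x y) (gp2 S w y z) ≤ gp2 S w y z := min_le_right _ _
    omega
  · simp only [Set.mem_Iic] at hj
    have hkey := gp2_le_geodesic hS hτ₄ hj w
    have hsymm := gp2_symm hS w x y
    have : min (gp2 S w x y) (gp2 S w x y) ≤ gp2 S w x y := min_le_right _ _
    omega

end Hyp

section Part3
variable {G : Type*} [Group G] {S : Set G} (hS : IsFinSymmGenSet S)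
include hS

/-- Distance along a path with unit steps is bounded by the parameter difference. -/
lemma dist_le_steps (c : ℤ → G) :
    ∀ m : ℕ, ∀ u v : ℤ, u ≤ v → v - u ≤ m →
      (∀ w, u ≤ w → w < v → wordDist S (c w) (c (w + 1)) ≤ 1) →
      (wordDist S (c u) (c v) : ℤ) ≤ v - u := by
  intro m
  induction m with
  | zero =>
      intro u v huv hm _
      have : v = u := by omega
      subst this
      simp [wordDist_self]
  | succ m IH =>
      intro u v huv hm hstep
      rcases eq_or_lt_of_le huv with rfl | hlt
      · simp [wordDist_self]
      · have h1 : u ≤ v - 1 := by omega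
        have h2 : v - 1 - u ≤ (m : ℤ) := by omega
        have htri := wordDist_triangle hS (c u) (c (v-1)) (c v)
        have hstep' : wordDist S (c (v-1)) (c v) ≤ 1 := by
          have := hstep (v-1) (by omega) (by omega)
          have he : v - 1 + 1 = v := by omega
          rwa [he] at this
        have := IH u (v-1) h1 h2 (fun w hw hw' => hstep w hw (by omega))
        omega

variable {δ : ℕ} (hhyp : DiscHyperbolic (wordDist S) δ)
include hhyp

/-- Chain lemma: a chain of points with long gaps and small Gromov products at the
intermediate points makes linear progress. -/
lemma chain_progress (ρ : ℝ) (hρ : 0 ≤ ρ) (x : ℕ → G) (n : ℕ) (hn1 : 1 ≤ n)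
    (ha : ∀ i, 1 ≤ i → i + 1 ≤ n → (gp2 S (x i) (x (i-1)) (x (i+1)) : ℝ) ≤ ρ)
    (hb : ∀ i, 1 ≤ i → i ≤ n → ρ + (6*δ+2) + 1 ≤ (wordDist S (x (i-1)) (x i) : ℝ)) :
    (n : ℝ) ≤ wordDist S (x 0) (x n) := by
  have key : ∀ m, 1 ≤ m → m ≤ n →
      (gp2 S (x (m-1)) (x 0) (x m) : ℝ) ≤ ρ + (6*δ+2) ∧
      (m : ℝ) ≤ wordDist S (x 0) (x m) := by
    intro m hm1
    induction m, hm1 using Nat.le_induction with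
    | base =>
        intro h1n
        constructor
        · have : gp2 S (x 0) (x 0) (x 1) = 0 := by
            unfold gp2; rw [wordDist_self]; omega
          simp only [Nat.sub_self] at *
          rw [this]; push_cast; positivity
        · have := hb 1 le_rfl h1n
          simp only [Nat.sub_self] at this
          push_cast at this ⊢
          linarith
    | succ m hm IH =>
        intro hmn
        have IH' := IH (by omega)
        simp only [Nat.add_sub_cancel]
        have hfour := fourPoint hS hhyp (x m) (x (m+1)) (x 0) (x (m-1))
        have hsymm1 := gp2_symm hS (x m) (x (m-1)) (x (m+1))
        have haa : (gp2 S (x m) (x (m+1)) (x (m-1)) : ℝ) ≤ ρ := by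
          rw [← hsymm1]; exact ha m hm hmn
        have hflip := gp2_flip hS (x m) (x 0) (x (m-1))
        -- gp2 (x m) (x 0) (x (m-1)) = 2 d((x m),(x (m-1))) - gp2 (x (m-1)) (x 0) (x m)
        have hbm := hb m hm (by omega)
        have hcomm := wordDist_comm hS (x m) (x (m-1))
        have hbig : ρ + (6*δ+2) + 2 ≤ (gp2 S (x m) (x 0) (x (m-1)) : ℝ) := by
          have e1Z : gp2 S (x m) (x 0) (x (m-1))
              = 2 * (wordDist S (x (m-1)) (x m) : ℤ) - gp2 S (x (m-1)) (x 0) (x m) := by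
            have hcommZ : (wordDist S (x m) (x (m-1)) : ℤ) = wordDist S (x (m-1)) (x m) := by
              exact_mod_cast hcomm
            linarith [hflip, hcommZ]
          have e1 : (gp2 S (x m) (x 0) (x (m-1)) : ℝ)
              = 2 * (wordDist S (x (m-1)) (x m) : ℝ) - (gp2 S (x (m-1)) (x 0) (x m) : ℝ) := by
            exact_mod_cast e1Z
          rw [e1]
          linarith [IH'.1]
        have hfourR : min ((gp2 S (x m) (x (m+1)) (x 0) : ℝ)) ((gp2 S (x m) (x 0) (x (m-1)) : ℝ))
            ≤ (gp2 S (x m) (x (m+1)) (x (m-1)) : ℝ) + 6*δ+2 := by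
          exact_mod_cast hfour
        have hgood : (gp2 S (x m) (x (m+1)) (x 0) : ℝ) ≤ ρ + (6*δ+2) := by
          rcases le_total ((gp2 S (x m) (x (m+1)) (x 0)) : ℝ) ((gp2 S (x m) (x 0) (x (m-1))) : ℝ) with hc | hc
          · rw [min_eq_left hc] at hfourR; linarith
          · rw [min_eq_right hc] at hfourR; linarith
        constructor
        · rw [gp2_symm hS]; exact hgood
        · have e2 : (wordDist S (x 0) (x (m+1)) : ℝ)
              = (wordDist S (x m) (x 0) : ℝ) + wordDist S (x m) (x (m+1))
                - gp2 S (x m) (x 0) (x (m+1)) := by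
            unfold gp2; push_cast; ring
          have hbm1 := hb (m+1) (by omega) hmn
          simp only [Nat.add_sub_cancel] at hbm1
          have hc2 := wordDist_comm hS (x m) (x 0)
          have hc3 := wordDist_comm hS (x m) (x (m+1))
          have hgood' : (gp2 S (x m) (x 0) (x (m+1)) : ℝ) ≤ ρ + (6*δ+2) := by
            rw [gp2_symm hS]; exact hgood
          rw [e2]
          have : (wordDist S (x m) (x 0) : ℝ) = wordDist S (x 0) (x m) := by
            rw [hc2]
          rw [this]
          push_cast
          have h6 := IH'.2
          push_cast at h6
          linarith [hbm1]
  exact (key n hn1 le_rfl).2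

end Part3

section Part4
variable {G : Type*} [Group G] {S : Set G} (hS : IsFinSymmGenSet S)
variable {δ : ℕ} (hhyp : DiscHyperbolic (wordDist S) δ)
include hS hhyp

/-- Any point on a geodesic between two points of a unit-step path is within
`δ log + 1` of the path. -/
lemma geodesic_near_path (c : ℤ → G) (s₀ t₀ : ℤ)
    (hstep : ∀ u, s₀ ≤ u → u < t₀ → wordDist S (c u) (c (u + 1)) ≤ 1) :
    ∀ m : ℕ, ∀ a b : ℤ, s₀ ≤ a → s₀ ≤ b → a ≤ t₀ → b ≤ t₀ → (b - a).natAbs ≤ m →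
    ∀ σ : ℕ → G, IsGeodesicSeg (wordDist S) σ (c a) (c b) →
    ∀ i, i ≤ wordDist S (c a) (c b) →
    ∃ u : ℤ, min a b ≤ u ∧ u ≤ max a b ∧
      wordDist S (σ i) (c u) ≤ δ * Nat.clog 2 m + 1 := by
  intro m
  induction m using Nat.strong_induction_on with
  | _ m IHm =>
  intro a b ha hb ha' hb' hm σ hσ i hi
  by_cases hsmall : (b - a).natAbs ≤ 1
  · -- short case
    have hd : wordDist S (c a) (c b) ≤ 1 := by
      have h3 : b = a ∨ b = a + 1 ∨ a = b + 1 := by omega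
      rcases h3 with rfl | h | h
      · simp [wordDist_self]
      · subst h; exact hstep a ha (by omega)
      · rw [wordDist_comm hS]
        subst h; exact hstep b hb (by omega)
    refine ⟨a, by omega, by omega, ?_⟩
    have hda : wordDist S (σ i) (c a) = i := by
      have := hσ.2.2 i 0 (le_trans hi (le_refl _)) (by omega)
      rw [hσ.1] at this
      rw [this]; simp [Nat.dist]
    rw [hda]; omega
  · -- long case : split at midpoint
    have hm2 : 2 ≤ (b - a).natAbs := by omega
    have hm2' : 2 ≤ m := by omega
    obtain ⟨mid, h1, h2, h3, h4⟩ :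
        ∃ mid : ℤ, min a b ≤ mid ∧ mid ≤ max a b ∧
          (mid - b).natAbs ≤ (m + 1) / 2 ∧ (a - mid).natAbs ≤ (m + 1) / 2 := by
      rcases le_total a b with hab | hab
      · exact ⟨a + (((b - a).natAbs + 1) / 2 : ℕ), by omega, by omega, by omega, by omega⟩
      · exact ⟨a - (((a - b).natAbs + 1) / 2 : ℕ), by omega, by omega, by omega, by omega⟩
    have hmidlo : s₀ ≤ mid := by omega
    have hmidhi : mid ≤ t₀ := by omega
    obtain ⟨τ₁, hτ₁⟩ := exists_geodesic hS (c b) (c mid)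
    obtain ⟨τ₂, hτ₂⟩ := exists_geodesic hS (c mid) (c a)
    obtain ⟨p, hp, hdp⟩ := hhyp (c a) (c b) (c mid) σ τ₁ τ₂ hσ hτ₁ hτ₂ i hi
    have hhalf : (m + 1) / 2 < m := by omega
    have hclog : Nat.clog 2 m = Nat.clog 2 ((m + 1) / 2) + 1 := by
      have := Nat.clog_of_two_le (b := 2) (by norm_num) hm2'
      simpa using this
    rcases hp with ⟨j, hj, rfl⟩ | ⟨j, hj, rfl⟩
    · simp only [Set.mem_Iic] at hj
      obtain ⟨u, hu1, hu2, hu3⟩ := IHm ((m + 1) / 2) hhalf b mid hb hmidlo hb' hmidhi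
        (by omega) τ₁ hτ₁ j hj
      refine ⟨u, by omega, by omega, ?_⟩
      have htri := wordDist_triangle hS (σ i) (τ₁ j) (c u)
      rw [hclog]
      have : δ * (Nat.clog 2 ((m + 1) / 2) + 1) + 1
          = (δ * Nat.clog 2 ((m + 1) / 2) + 1) + δ := by ring
      rw [this]
      omega
    · simp only [Set.mem_Iic] at hj
      obtain ⟨u, hu1, hu2, hu3⟩ := IHm ((m + 1) / 2) hhalf mid a hmidlo ha hmidhi ha'
        (by omega) τ₂ hτ₂ j hj
      refine ⟨u, by omega, by omega, ?_⟩
      have htri := wordDist_triangle hS (σ i) (τ₂ j) (c u)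
      rw [hclog]
      have : δ * (Nat.clog 2 ((m + 1) / 2) + 1) + 1
          = (δ * Nat.clog 2 ((m + 1) / 2) + 1) + δ := by ring
      rw [this]
      omega

/-- The Gromov product of the endpoints of a quasi-geodesic window at an
intermediate point is bounded. -/
lemma window_gp (c : ℤ → G) (s₀ t₀ : ℤ) (hst : s₀ ≤ t₀) (m : ℕ)
    (hm : t₀ - s₀ ≤ (m : ℤ))
    (hstep : ∀ u, s₀ ≤ u → u < t₀ → wordDist S (c u) (c (u + 1)) ≤ 1)
    (lam : ℝ) (hlam : 0 < lam) (eps : ℕ)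
    (hlow : ∀ u v : ℤ, s₀ ≤ u → u ≤ t₀ → s₀ ≤ v → v ≤ t₀ →
      lam * |(u : ℝ) - v| - eps ≤ (wordDist S (c u) (c v) : ℝ))
    (u : ℤ) (hu1 : s₀ ≤ u) (hu2 : u ≤ t₀) :
    (gp2 S (c u) (c s₀) (c t₀) : ℝ) ≤
      2 * (((δ * Nat.clog 2 m + 1 : ℕ) : ℝ) +
        (2 * ((δ * Nat.clog 2 m + 1 : ℕ) : ℝ) + 1 + eps) / lam) := by
  set R₁ : ℕ := δ * Nat.clog 2 m + 1 with hR₁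
  set R₂ : ℝ := (R₁ : ℝ) + (2 * (R₁ : ℝ) + 1 + eps) / lam with hR₂
  obtain ⟨σ, hσ⟩ := exists_geodesic hS (c s₀) (c t₀)
  set n := wordDist S (c s₀) (c t₀) with hn
  -- the set of geodesic parameters that are R₁-close to the path before u
  set A : Set ℕ := {i | i ≤ n ∧ ∃ v : ℤ, s₀ ≤ v ∧ v ≤ u ∧ wordDist S (σ i) (c v) ≤ R₁} with hA
  have h0A : 0 ∈ A := by
    refine ⟨Nat.zero_le _, s₀, le_rfl, hu1, ?_⟩
    rw [hσ.1, wordDist_self]; omega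
  have hbdd : BddAbove A := ⟨n, fun i hi => hi.1⟩
  set i₀ := sSup A with hi₀
  have hi₀A : i₀ ∈ A := Nat.sSup_mem ⟨0, h0A⟩ hbdd
  obtain ⟨hi₀n, v, hv1, hv2, hv3⟩ := hi₀A
  -- d (c u) (c v) ≤ u - v
  have hdcv : (wordDist S (c v) (c u) : ℝ) ≤ (u : ℝ) - v := by
    have := dist_le_steps hS c (u - v).toNat v u hv2 (by omega)
      (fun w hw hw' => hstep w (by omega) (by omega))
    have h' : (wordDist S (c v) (c u) : ℝ) ≤ ((u - v : ℤ) : ℝ) := by exact_mod_cast this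
    rwa [Int.cast_sub] at h'
  have key : ∃ i ≤ n, (wordDist S (c u) (σ i) : ℝ) ≤ R₂ := by
    rcases eq_or_lt_of_le hi₀n with heq | hlt
    · -- i₀ = n : the endpoint c t₀ is close to c v with v ≤ u
      refine ⟨i₀, hi₀n, ?_⟩
      have hend : σ i₀ = c t₀ := by rw [heq]; exact hσ.2.1
      have hlow' := hlow t₀ v hst le_rfl hv1 (le_trans hv2 hu2)
      have habs : |(t₀ : ℝ) - v| = (t₀ : ℝ) - v := by
        rw [abs_of_nonneg]; push_cast; have : v ≤ t₀ := le_trans hv2 hu2; exact_mod_cast sub_nonneg.2 (by exact_mod_cast this)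
      have hdtv : (wordDist S (c t₀) (c v) : ℝ) ≤ R₁ := by
        rw [← hend]; exact_mod_cast hv3
      rw [habs] at hlow'
      have hgap : (t₀ : ℝ) - v ≤ ((R₁ : ℝ) + eps) / lam := by
        rw [le_div_iff₀ hlam]; nlinarith
      have htri := wordDist_triangle hS (c u) (c v) (σ i₀)
      have hcvσ : (wordDist S (c v) (σ i₀) : ℝ) ≤ R₁ := by
        rw [wordDist_comm hS]; exact_mod_cast hv3
      have htriR : (wordDist S (c u) (σ i₀) : ℝ) ≤ (wordDist S (c u) (c v) : ℝ) + (wordDist S (c v) (σ i₀) : ℝ) := by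
        exact_mod_cast htri
      have hcuv : (wordDist S (c u) (c v) : ℝ) ≤ (u : ℝ) - v := by
        rw [wordDist_comm hS]; exact hdcv
      have huv : (u : ℝ) - v ≤ (t₀ : ℝ) - v := by
        have : u ≤ t₀ := hu2
        have : (u : ℝ) ≤ t₀ := by exact_mod_cast this
        linarith
      have hmono : ((R₁ : ℝ) + eps) / lam ≤ (2 * (R₁ : ℝ) + 1 + eps) / lam :=
        (div_le_div_iff_of_pos_right hlam).2 (by linarith)
      rw [hR₂]
      linarith
    · -- i₀ < n
      refine ⟨i₀, hi₀n, ?_⟩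
      obtain ⟨u', hu'1, hu'2, hu'3⟩ := geodesic_near_path hS hhyp c s₀ t₀ hstep m s₀ t₀
        le_rfl hst hst le_rfl (by omega) σ hσ (i₀ + 1) (by omega)
      rw [min_eq_left hst] at hu'1
      rw [max_eq_right hst] at hu'2
      have hu'u : u < u' := by
        by_contra hcon
        push_neg at hcon
        have : i₀ + 1 ∈ A := ⟨by omega, u', hu'1, hcon, hu'3⟩
        have := le_csSup hbdd this
        omega
      -- d(c v, c u') ≤ 2 R₁ + 1
      have hσσ : wordDist S (σ i₀) (σ (i₀ + 1)) = 1 := by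
        have := hσ.2.2 i₀ (i₀ + 1) (by omega) (by omega)
        rw [this]; simp [Nat.dist]
      have ht1 := wordDist_triangle hS (c v) (σ i₀) (σ (i₀ + 1))
      have ht2 := wordDist_triangle hS (c v) (σ (i₀ + 1)) (c u')
      have hvσ : wordDist S (c v) (σ i₀) ≤ R₁ := by
        rw [wordDist_comm hS]; exact hv3
      have hcvu' : wordDist S (c v) (c u') ≤ 2 * R₁ + 1 := by omega
      have hlow' := hlow u' v (le_trans hu1 (le_of_lt hu'u)) hu'2 hv1 (le_trans hv2 hu2)
      have habs : |(u' : ℝ) - v| = (u' : ℝ) - v := by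
        rw [abs_of_nonneg]
        have : v ≤ u' := by omega
        have : (v : ℝ) ≤ u' := by exact_mod_cast this
        linarith
      rw [habs] at hlow'
      have hgap : (u' : ℝ) - v ≤ (2 * (R₁ : ℝ) + 1 + eps) / lam := by
        rw [le_div_iff₀ hlam]
        have : (wordDist S (c u') (c v) : ℝ) ≤ 2 * (R₁ : ℝ) + 1 := by
          rw [wordDist_comm hS]; exact_mod_cast hcvu'
        nlinarith
      have htri := wordDist_triangle hS (c u) (c v) (σ i₀)
      have htriR : (wordDist S (c u) (σ i₀) : ℝ) ≤ (wordDist S (c u) (c v) : ℝ) + (wordDist S (c v) (σ i₀) : ℝ) := by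
        exact_mod_cast htri
      have hcuv : (wordDist S (c u) (c v) : ℝ) ≤ (u : ℝ) - v := by
        rw [wordDist_comm hS]; exact hdcv
      have huv : (u : ℝ) - v ≤ (u' : ℝ) - v := by
        have : (u : ℝ) ≤ u' := by exact_mod_cast (le_of_lt hu'u)
        linarith
      have hvσR : (wordDist S (c v) (σ i₀) : ℝ) ≤ R₁ := by exact_mod_cast hvσ
      rw [hR₂]
      linarith
  obtain ⟨i, hin, hclose⟩ := key
  have hgp := gp2_le_geodesic hS hσ hin (c u)
  have hgpR : (gp2 S (c u) (c s₀) (c t₀) : ℝ) ≤ 2 * (wordDist S (c u) (σ i) : ℝ) := by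
    exact_mod_cast hgp
  linarith

end Part4

section MainAux

lemma sq_le_two_pow : ∀ M : ℕ, 4 ≤ M → M * M ≤ 2 ^ M := by
  intro M hM
  induction M, hM using Nat.le_induction with
  | base => norm_num
  | succ M hM IH =>
      have h1 : 3 * M ≤ M * M := Nat.mul_le_mul_right M (by omega)
      have h2 : (M + 1) * (M + 1) = M * M + (2 * M + 1) := by ring
      have h3 : 2 ^ (M + 1) = 2 ^ M + 2 ^ M := by ring
      omega

end MainAux

set_option maxHeartbeats 1000000 in
/-- in a hyperbolic group, local quasi-geodesics (for a sufficiently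
large locality constant) are global quasi-geodesics. -/
theorem local_to_global_quasigeodesic {G : Type*} [Group G] (S : Set G)
    (hS : IsFinSymmGenSet S) (δ : ℕ) (hhyp : DiscHyperbolic (wordDist S) δ)
    (lam : ℝ) (hlam : lam ∈ Set.Ioc (0 : ℝ) 1) (eps : ℕ) :
    ∃ k₀ : ℕ, 8 * δ < k₀ ∧ ∀ k ≥ k₀,
      ∃ lam' ∈ Set.Ioc (0 : ℝ) 1, ∃ eps' : ℕ,
        ∀ (c : ℤ → G) (N : Set ℤ), N.OrdConnected →
          IsLocalQuasiGeodesicZ (wordDist S) c N k lam eps →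
          IsQuasiGeodesicZ (wordDist S) c N lam' eps' := by
  obtain ⟨hlam0, hlam1⟩ := hlam
  -- choose the scale M
  set α : ℝ := 2 * δ + 4 * δ / lam with hα
  set β : ℝ := eps + 10 * δ + 5 + (8 * δ + 6 + 2 * eps) / lam with hβ
  have hα0 : 0 ≤ α := by positivity
  have hβ0 : 0 ≤ β := by positivity
  obtain ⟨M0, hM0⟩ := exists_nat_ge ((α + β) / lam)
  set M : ℕ := max 4 M0 with hM
  have hM4 : 4 ≤ M := le_max_left _ _
  have hαβ : α + β ≤ lam * M := by
    have h1 : (α + β) / lam ≤ (M : ℝ) := le_trans hM0 (by exact_mod_cast le_max_right 4 M0)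
    rw [div_le_iff₀ hlam0] at h1
    linarith [h1]
  set D : ℕ := 2 ^ M with hD
  have hD1 : 1 ≤ D := Nat.one_le_two_pow
  -- the Gromov product bound from the window lemma
  set Rn : ℕ := δ * (M + 2) + 1 with hRn
  set ρ : ℝ := 2 * ((Rn : ℝ) + (2 * (Rn : ℝ) + 1 + eps) / lam) with hρ
  have hρ0 : 0 ≤ ρ := by positivity
  have hKey : (eps : ℝ) + ρ + 6 * δ + 3 ≤ lam * D := by
    have heq : (eps : ℝ) + ρ + 6 * δ + 3 = α * M + β := by
      rw [hρ, hRn, hα, hβ]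
      push_cast
      field_simp
      ring
    rw [heq]
    have hsq : ((M : ℝ)) * M ≤ (D : ℝ) := by
      have := sq_le_two_pow M hM4
      rw [hD]
      exact_mod_cast this
    have hM1 : (1 : ℝ) ≤ (M : ℝ) := by exact_mod_cast le_trans (by norm_num) hM4
    have c1 : lam * ((M : ℝ) * M) ≤ lam * D := by
      apply mul_le_mul_of_nonneg_left hsq (le_of_lt hlam0)
    have c2 : (α + β) * M ≤ (lam * M) * M := by
      apply mul_le_mul_of_nonneg_right hαβ (by positivity)
    nlinarith
  refine ⟨3 * D + 8 * δ + 1, by omega, ?_⟩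
  intro k hk
  set lam' : ℝ := min lam (1 / (2 * (D : ℝ))) with hlam'
  have hlam'0 : 0 < lam' := lt_min hlam0 (by positivity)
  have hlam'lam : lam' ≤ lam := min_le_left _ _
  have hlam'D : lam' ≤ 1 / (2 * (D : ℝ)) := min_le_right _ _
  refine ⟨lam', ⟨hlam'0, le_trans hlam'lam hlam1⟩, eps, ?_⟩
  intro c N hN hloc
  have hsub : ∀ s t : ℤ, s ∈ N → t ∈ N → ∀ w : ℤ, s ≤ w → w ≤ t → w ∈ N :=
    fun s t hs ht w h1 h2 => hN.out hs ht ⟨h1, h2⟩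
  have hstep : ∀ s t : ℤ, s ∈ N → t ∈ N → ∀ w, s ≤ w → w < t →
      wordDist S (c w) (c (w + 1)) ≤ 1 := by
    intro s t hs ht w h1 h2
    have hw : w ∈ N := hsub s t hs ht w h1 (by omega)
    have hw1 : w + 1 ∈ N := hsub s t hs ht (w + 1) (by omega) (by omega)
    have habs : |w - (w + 1)| = 1 := by
      rw [show w - (w+1) = -1 by ring]; norm_num
    have := (hloc w hw (w + 1) hw1 (by rw [habs]; exact_mod_cast (show 1 ≤ k by omega))).2
    rw [habs] at this
    omega
  have hupper : ∀ s t : ℤ, s ∈ N → t ∈ N → s ≤ t →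
      (wordDist S (c s) (c t) : ℤ) ≤ t - s := by
    intro s t hs ht hst
    exact dist_le_steps hS c (t - s).toNat s t hst (by omega) (hstep s t hs ht)
  have hlower : ∀ s t : ℤ, s ∈ N → t ∈ N → s ≤ t →
      lam' * ((t - s : ℤ) : ℝ) - eps ≤ (wordDist S (c s) (c t) : ℝ) := by
    intro s t hs ht hst
    by_cases hshort : t - s ≤ (D : ℤ)
    · have hkD : (t - s : ℤ) ≤ (k : ℤ) := by
        have : (D : ℤ) ≤ (k : ℤ) := by exact_mod_cast le_trans (by omega) hk
        omega
      have habs : |s - t| = t - s := by rw [abs_sub_comm, abs_of_nonneg (by omega)]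
      have := (hloc s hs t ht (by rw [habs]; exact hkD)).1
      rw [habs] at this
      have hmul : lam' * ((t - s : ℤ) : ℝ) ≤ lam * ((t - s : ℤ) : ℝ) := by
        apply mul_le_mul_of_nonneg_right hlam'lam
        have : (0 : ℤ) ≤ t - s := by omega
        exact_mod_cast this
      linarith
    · -- long case
      push_neg at hshort
      set L : ℤ := t - s with hL
      set nn : ℕ := L.toNat / D with hnn
      have hLpos : (D : ℤ) < L := hshort
      have hmod := Nat.div_add_mod L.toNat D
      have hmlt : L.toNat % D < D := Nat.mod_lt _ (by omega)
      have hnn1 : 1 ≤ nn := by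
        rw [hnn, Nat.one_le_div_iff (by omega)]
        omega
      have hmodZ : (D : ℤ) * nn + (L.toNat % D : ℕ) = (L.toNat : ℤ) := by exact_mod_cast hmod
      have hmltZ : ((L.toNat % D : ℕ) : ℤ) < (D : ℤ) := by exact_mod_cast hmlt
      have hmodZ0 : (0 : ℤ) ≤ ((L.toNat % D : ℕ) : ℤ) := by positivity
      have hLnn : (L.toNat : ℤ) = L := by omega
      have h1' : (nn : ℤ) * D ≤ L := by linarith [hmodZ, hmltZ, hmodZ0, hLnn]
      have h2' : L < ((nn : ℤ) + 1) * D := by linarith [hmodZ, hmltZ, hmodZ0, hLnn]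
      set ti : ℕ → ℤ := fun i => if i < nn then s + i * D else t with hti
      have htival : ∀ i, i < nn → ti i = s + i * D := by
        intro i h
        show (if i < nn then s + (i : ℤ) * D else t) = s + i * D
        rw [if_pos h]
      have htivaln : ∀ i, ¬ i < nn → ti i = t := by
        intro i h
        show (if i < nn then s + (i : ℤ) * D else t) = t
        rw [if_neg h]
      have htis : ti 0 = s := by rw [htival 0 (by omega)]; push_cast; ring
      have htin : ti nn = t := htivaln nn (by omega)
      have htimem : ∀ i, i ≤ nn → s ≤ ti i ∧ ti i ≤ t := by
        intro i hi
        by_cases hcase : i < nn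
        · rw [htival i hcase]
          have hiD : (i : ℤ) * D ≤ (nn : ℤ) * D :=
            mul_le_mul_of_nonneg_right (by exact_mod_cast hi) (by positivity)
          constructor
          · have : (0 : ℤ) ≤ (i : ℤ) * D := by positivity
            omega
          · omega
        · rw [htivaln i hcase]
          exact ⟨by omega, le_rfl⟩
      have hgap : ∀ i, 1 ≤ i → i ≤ nn →
          (D : ℤ) ≤ ti i - ti (i - 1) ∧ ti i - ti (i - 1) ≤ 2 * D := by
        intro i hi1 hi2
        have hprev : i - 1 < nn := by omega
        have hcast : ((i - 1 : ℕ) : ℤ) = (i : ℤ) - 1 := by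
          push_cast [Nat.cast_sub hi1]; ring
        by_cases hcase : i < nn
        · rw [htival i hcase, htival (i - 1) hprev, hcast]
          constructor <;> linarith [hD1]
        · have hieq : ti i = t := htivaln i hcase
          rw [hieq, htival (i - 1) hprev, hcast]
          have hinn : (i : ℤ) = nn := by omega
          rw [hinn]
          constructor <;> linarith [h1', h2', hL]
      have htiN : ∀ i, i ≤ nn → ti i ∈ N := by
        intro i hi
        obtain ⟨ha, hb⟩ := htimem i hi
        exact hsub s t hs ht _ ha hb
      -- chain hypotheses
      have hkD3 : (3 * D : ℤ) ≤ (k : ℤ) := by exact_mod_cast le_trans (by omega) hk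
      have hkD2 : (2 * D : ℤ) ≤ (k : ℤ) := by omega
      have hb : ∀ i, 1 ≤ i → i ≤ nn →
          ρ + (6 * δ + 2) + 1 ≤ (wordDist S (c (ti (i - 1))) (c (ti i)) : ℝ) := by
        intro i hi1 hi2
        obtain ⟨hg1, hg2⟩ := hgap i hi1 hi2
        have hmem1 := htiN (i - 1) (by omega)
        have hmem2 := htiN i hi2
        have habs : |ti (i - 1) - ti i| = ti i - ti (i - 1) := by
          rw [abs_sub_comm, abs_of_nonneg (by omega)]
        have hlo := (hloc (ti (i - 1)) hmem1 (ti i) hmem2 (by rw [habs]; omega)).1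
        rw [habs] at hlo
        have hmul : lam * ((D : ℤ) : ℝ) ≤ lam * ((ti i - ti (i - 1) : ℤ) : ℝ) := by
          apply mul_le_mul_of_nonneg_left ?_ (le_of_lt hlam0)
          exact_mod_cast hg1
        push_cast at hmul hlo ⊢
        linarith [hKey]
      have ha : ∀ i, 1 ≤ i → i + 1 ≤ nn →
          (gp2 S (c (ti i)) (c (ti (i - 1))) (c (ti (i + 1))) : ℝ) ≤ ρ := by
        intro i hi1 hi2
        obtain ⟨hg1, hg2⟩ := hgap i hi1 (by omega)
        obtain ⟨hg3, hg4⟩ := hgap (i + 1) (by omega) hi2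
        simp only [Nat.add_sub_cancel] at hg3 hg4
        -- gap i is exactly D since i < nn
        have higap : ti i - ti (i - 1) ≤ (D : ℤ) := by
          have hilt : i < nn := by omega
          have hprev : i - 1 < nn := by omega
          have hcast : ((i - 1 : ℕ) : ℤ) = (i : ℤ) - 1 := by
            push_cast [Nat.cast_sub hi1]; ring
          rw [htival i hilt, htival (i - 1) hprev, hcast]
          linarith
        set s₀ := ti (i - 1) with hs₀
        set t₀ := ti (i + 1) with ht₀
        have hwin : t₀ - s₀ ≤ (3 * D : ℤ) := by omega
        have hst₀ : s₀ ≤ t₀ := by omega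
        have hmemi := htimem i (by omega)
        have hmems := htimem (i - 1) (by omega)
        have hmemt := htimem (i + 1) hi2
        have hwstep : ∀ u, s₀ ≤ u → u < t₀ → wordDist S (c u) (c (u + 1)) ≤ 1 := by
          intro u hu1 hu2
          exact hstep s t hs ht u (by omega) (by omega)
        have hwlow : ∀ u v : ℤ, s₀ ≤ u → u ≤ t₀ → s₀ ≤ v → v ≤ t₀ →
            lam * |(u : ℝ) - v| - eps ≤ (wordDist S (c u) (c v) : ℝ) := by
          intro u v hu1 hu2 hv1 hv2
          have hmu : u ∈ N := hsub s t hs ht u (by omega) (by omega)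
          have hmv : v ∈ N := hsub s t hs ht v (by omega) (by omega)
          have hbound : |u - v| ≤ (k : ℤ) := by
            rw [abs_le]; omega
          have := (hloc u hmu v hmv hbound).1
          have hcast : ((|u - v| : ℤ) : ℝ) = |(u : ℝ) - v| := by push_cast; ring_nf
          rw [hcast] at this
          exact this
        have hm4D : t₀ - s₀ ≤ ((2 ^ (M + 2) : ℕ) : ℤ) := by
          have : ((2 ^ (M + 2) : ℕ) : ℤ) = 4 * D := by
            rw [hD]; push_cast; ring
          omega
        have hwgp := window_gp hS hhyp c s₀ t₀ hst₀ (2 ^ (M + 2)) hm4D hwstep lam hlam0 eps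
          hwlow (ti i) (by omega) (by omega)
        have hclogpow : Nat.clog 2 (2 ^ (M + 2)) = M + 2 := Nat.clog_pow 2 (M + 2) (by norm_num)
        rw [hclogpow] at hwgp
        rw [hρ, hRn]
        convert hwgp using 3 <;> push_cast <;> ring
      have hchain := chain_progress hS hhyp ρ hρ0 (fun i => c (ti i)) nn hnn1
        (fun i h1 h2 => ha i h1 h2) (fun i h1 h2 => hb i h1 h2)
      have hchain' : (nn : ℝ) ≤ (wordDist S (c s) (c t) : ℝ) := by
        simpa [htis, htin] using hchain
      -- conclude
      have hL2 : ((L : ℤ) : ℝ) ≤ 2 * nn * D := by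
        have hD' : (1 : ℤ) * D ≤ (nn : ℤ) * D :=
          mul_le_mul_of_nonneg_right (by exact_mod_cast hnn1) (by positivity)
        have : L ≤ 2 * nn * D := by linarith [h2', hD']
        exact_mod_cast this
      have hfin : lam' * ((L : ℤ) : ℝ) ≤ (nn : ℝ) := by
        have e1 : lam' * ((L : ℤ) : ℝ) ≤ (1 / (2 * (D : ℝ))) * ((L : ℤ) : ℝ) := by
          apply mul_le_mul_of_nonneg_right hlam'D
          have : (0 : ℤ) ≤ L := by omega
          exact_mod_cast this
        have e2 : (1 / (2 * (D : ℝ))) * ((L : ℤ) : ℝ) ≤ (nn : ℝ) := by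
          rw [one_div, inv_mul_eq_div, div_le_iff₀ (by positivity)]
          push_cast at hL2 ⊢
          linarith
        linarith
      have heps : (0 : ℝ) ≤ eps := by positivity
      linarith [hchain', hfin]
  -- final assembly
  intro s hs t ht
  rcases le_total s t with hst | hst
  · have habs : |s - t| = t - s := by rw [abs_sub_comm, abs_of_nonneg (by omega)]
    rw [habs]
    exact ⟨hlower s t hs ht hst, hupper s t hs ht hst⟩
  · have habs : |s - t| = s - t := abs_of_nonneg (by omega)
    rw [habs]
    have hcomm : wordDist S (c s) (c t) = wordDist S (c t) (c s) := wordDist_comm hS _ _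
    rw [hcomm]
    exact ⟨hlower t s ht hs hst, hupper t s ht hs hst⟩
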